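/- arXiv:1404.5240 — 8 statements merged into one kernel-verified Lean document; each statement's English description precedes it below -/
import Mathlib

section
/- Let K be a field, r ≥ 1 an integer, χ_1, …, χ_r pairwise distinct elements of K, and u ∈ K with u ≠ 1. Then Σ_{l=1}^{r} ∏_{a≠l} (χ_l − u·χ_a)/(χ_l − χ_a) = (1 − u^r)/(1 − u). -/
open Polynomial Finset

lemma key {F : Type*} [Field F] (r : ℕ) (hr : 1 ≤ r) (v : Fin r → F)
    (hv : Function.Injective v) (h0 : ∀ i, v i ≠ 0) (u : F) (hu : u ≠ 1) :
    ∑ l : Fin r, ∏ a ∈ Finset.univ.erase l, (v l - u * v a) / (v l - v a)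
      = (1 - u ^ r) / (1 - u) := by
  have hvs : Set.InjOn v (Finset.univ : Finset (Fin r)) := Function.Injective.injOn hv
  have hcard : #(Finset.univ : Finset (Fin r)) = r := by simp
  set g : F[X] := ∏ a : Fin r, (X - C (u * v a)) with hg
  set h : F[X] := Lagrange.nodal Finset.univ v with hh
  have hgm : g.Monic := monic_prod_of_monic _ _ fun i _ => monic_X_sub_C _
  have hdg : g.degree = (r : WithBot ℕ) := by
    rw [hg, degree_prod]
    simp only [degree_X_sub_C, Finset.sum_const, Finset.card_univ, Fintype.card_fin, nsmul_eq_mul, mul_one]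
  have hdh : h.degree = (r : WithBot ℕ) := by
    rw [hh, Lagrange.degree_nodal, hcard]
  have hdf : (g - h).degree < (#(Finset.univ : Finset (Fin r)) : WithBot ℕ) := by
    rw [hcard]
    calc (g - h).degree < g.degree :=
          degree_sub_lt (hdg.trans hdh.symm) hgm.ne_zero
            (hgm.leadingCoeff.trans Lagrange.nodal_monic.leadingCoeff.symm)
      _ = (r : WithBot ℕ) := hdg
  have interp := Lagrange.eq_interpolate hvs hdf
  have E := congrArg (eval 0) interp
  rw [Lagrange.interpolate_apply, eval_finset_sum] at E
  set P : F := ∏ a : Fin r, v a with hP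
  have hPne : P ≠ 0 := Finset.prod_ne_zero_iff.mpr fun a _ => h0 a
  have hcarde : ∀ i : Fin r, #(Finset.univ.erase i) = r - 1 := by
    intro i; rw [Finset.card_erase_of_mem (Finset.mem_univ i), hcard]
  have e1 : eval 0 g = (-u) ^ r * P := by
    rw [hg, eval_prod]
    simp only [eval_sub, eval_X, eval_C, zero_sub]
    rw [show (∏ a : Fin r, -(u * v a)) = ∏ a : Fin r, (-u) * v a from
      Finset.prod_congr rfl fun a _ => by ring]
    rw [Finset.prod_mul_distrib, Finset.prod_const, Finset.card_univ, Fintype.card_fin, hP]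
  have e2 : eval 0 h = (-1 : F) ^ r * P := by
    rw [hh, Lagrange.eval_nodal]
    rw [show (∏ a : Fin r, ((0:F) - v a)) = ∏ a : Fin r, (-1) * v a from
      Finset.prod_congr rfl fun a _ => by ring]
    rw [Finset.prod_mul_distrib, Finset.prod_const, Finset.card_univ, Fintype.card_fin, hP]
  have e3 : ∀ i : Fin r, eval (v i) (g - h)
      = (1 - u) * (v i * ∏ a ∈ Finset.univ.erase i, (v i - u * v a)) := by
    intro i
    rw [eval_sub, hh, Lagrange.eval_nodal_at_node (Finset.mem_univ i), sub_zero, hg, eval_prod]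
    simp only [eval_sub, eval_X, eval_C]
    rw [← Finset.mul_prod_erase Finset.univ _ (Finset.mem_univ i)]
    ring
  have e4 : ∀ i : Fin r, eval 0 (Lagrange.basis Finset.univ v i)
      = ∏ a ∈ Finset.univ.erase i, ((v i - v a)⁻¹ * (0 - v a)) := by
    intro i
    rw [Lagrange.basis, eval_prod]
    exact Finset.prod_congr rfl fun a _ => by
      simp [Lagrange.basisDivisor]
  have key2 : ∀ i : Fin r, eval 0 (C (eval (v i) (g - h)) * Lagrange.basis Finset.univ v i)
      = ((1 - u) * ((-1 : F) ^ (r - 1) * P))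
        * ∏ a ∈ Finset.univ.erase i, (v i - u * v a) / (v i - v a) := by
    intro i
    rw [eval_mul, eval_C, e3 i, e4 i]
    have comb : (∏ a ∈ Finset.univ.erase i, (v i - u * v a))
        * ∏ a ∈ Finset.univ.erase i, ((v i - v a)⁻¹ * (0 - v a))
        = (∏ a ∈ Finset.univ.erase i, (v i - u * v a) / (v i - v a))
          * ((-1 : F) ^ (r - 1) * ∏ a ∈ Finset.univ.erase i, v a) := by
      rw [← Finset.prod_mul_distrib]
      conv_rhs => rw [show ((-1 : F) ^ (r - 1)) = ∏ _a ∈ Finset.univ.erase i, (-1 : F) by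
          rw [Finset.prod_const, hcarde i],
        ← Finset.prod_mul_distrib, ← Finset.prod_mul_distrib]
      exact Finset.prod_congr rfl fun a _ => by
        rw [div_eq_mul_inv]; ring
    have hvP : v i * ∏ a ∈ Finset.univ.erase i, v a = P := by
      rw [hP, Finset.mul_prod_erase Finset.univ v (Finset.mem_univ i)]
    calc (1 - u) * (v i * ∏ a ∈ Finset.univ.erase i, (v i - u * v a))
          * ∏ a ∈ Finset.univ.erase i, ((v i - v a)⁻¹ * (0 - v a))
        = (1 - u) * v i * ((∏ a ∈ Finset.univ.erase i, (v i - u * v a))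
            * ∏ a ∈ Finset.univ.erase i, ((v i - v a)⁻¹ * (0 - v a))) := by ring
      _ = (1 - u) * v i * ((∏ a ∈ Finset.univ.erase i, (v i - u * v a) / (v i - v a))
            * ((-1 : F) ^ (r - 1) * ∏ a ∈ Finset.univ.erase i, v a)) := by rw [comb]
      _ = (1 - u) * ((-1 : F) ^ (r - 1) * (v i * ∏ a ∈ Finset.univ.erase i, v a))
            * ∏ a ∈ Finset.univ.erase i, (v i - u * v a) / (v i - v a) := by ring
      _ = _ := by rw [hvP]
  rw [eval_sub, e1, e2, Finset.sum_congr rfl (fun i _ => key2 i), ← Finset.mul_sum] at E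
  -- E : (-u)^r * P - (-1)^r * P = ((1-u) * ((-1)^(r-1) * P)) * Σ T
  have hneg : (-1 : F) ^ r = (-1 : F) ^ (r - 1) * (-1) := by
    conv_lhs => rw [show r = (r - 1) + 1 from (Nat.succ_pred_eq_of_pos hr).symm]
    rw [pow_succ]
  have hnegu : (-u : F) ^ r = (-1 : F) ^ r * u ^ r := by
    rw [neg_pow]
  have E2 : ((-1 : F) ^ (r - 1) * P) * (1 - u ^ r)
      = ((-1 : F) ^ (r - 1) * P) * ((1 - u)
        * ∑ l : Fin r, ∏ a ∈ Finset.univ.erase l, (v l - u * v a) / (v l - v a)) := by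
    rw [hnegu, hneg] at E; linear_combination E
  have hc : ((-1 : F) ^ (r - 1) * P) ≠ 0 :=
    mul_ne_zero (pow_ne_zero _ (by norm_num)) hPne
  have E3 := mul_left_cancel₀ hc E2
  rw [eq_div_iff (sub_ne_zero_of_ne (Ne.symm hu))]
  rw [E3]; ring



/-- For a field `K`, `r ≥ 1`, pairwise distinct `χ_1, …, χ_r ∈ K`, and
`u ∈ K` with `u ≠ 1`, one has
`Σ_{l=1}^{r} ∏_{a≠l} (χ_l − u·χ_a)/(χ_l − χ_a) = (1 − u^r)/(1 − u)`. -/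
theorem sum_prod_ratio_eq_geom {K : Type*} [Field K] (r : ℕ) (hr : 1 ≤ r)
    (χ : Fin r → K) (hχ : Function.Injective χ) (u : K) (hu : u ≠ 1) :
    ∑ l : Fin r, ∏ a ∈ Finset.univ.erase l, (χ l - u * χ a) / (χ l - χ a)
      = (1 - u ^ r) / (1 - u) := by
  classical
  set φ : K[X] →+* RatFunc K := (algebraMap K[X] (RatFunc K) : K[X] →+* RatFunc K) with hφdef
  have hφ : Function.Injective φ := IsFractionRing.injective K[X] (RatFunc K)
  set v : Fin r → RatFunc K := fun i => φ (X + C (χ i)) with hvdef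
  have h0 : ∀ i, v i ≠ 0 := fun i => by
    simp only [hvdef]
    intro hc
    exact (Polynomial.monic_X_add_C (χ i)).ne_zero (hφ (by rw [hc, map_zero]))
  have hv : Function.Injective v := fun i j hij => by
    apply hχ
    have := hφ hij
    have h2 := congrArg (fun p => Polynomial.coeff p 0) this
    simpa using h2
  have hu' : φ (C u) ≠ 1 := fun hc => by
    apply hu
    have : φ (C u) = φ 1 := by rw [hc, map_one]
    have := hφ this
    rwa [← Polynomial.C_1, Polynomial.C_inj] at this
  have KEY := key r hr v hv h0 (φ (C u)) hu'
  -- per-factor rewrite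
  set q : Fin r → Fin r → K[X] := fun l a =>
    ((X + C (χ l)) - C u * (X + C (χ a))) * C ((χ l - χ a)⁻¹) with hqdef
  have hdiff : ∀ (l a : Fin r), a ≠ l → χ l - χ a ≠ 0 := fun l a hla =>
    sub_ne_zero_of_ne (fun hc => hla (hχ hc).symm)
  have factor : ∀ (l a : Fin r), a ≠ l →
      (v l - φ (C u) * v a) / (v l - v a) = φ (q l a) := by
    intro l a hla
    have hsub : v l - v a = φ (C (χ l - χ a)) := by
      simp only [hvdef, ← map_sub]
      congr 1
      rw [Polynomial.C_sub]; ring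
    have hne : v l - v a ≠ 0 := by
      rw [hsub]
      intro hc
      exact hdiff l a hla (by
        have := hφ (by rw [hc, map_zero] : φ (C (χ l - χ a)) = φ 0)
        rwa [Polynomial.C_eq_zero] at this)
    rw [div_eq_iff hne, hsub, ← map_mul, hqdef]
    simp only [hvdef, ← map_sub, ← map_mul]
    congr 1
    rw [mul_assoc, ← Polynomial.C_mul, inv_mul_cancel₀ (hdiff l a hla), Polynomial.C_1, mul_one]
  have lhs_eq : (∑ l : Fin r, ∏ a ∈ Finset.univ.erase l, (v l - φ (C u) * v a) / (v l - v a))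
      = φ (∑ l : Fin r, ∏ a ∈ Finset.univ.erase l, q l a) := by
    rw [map_sum]
    refine Finset.sum_congr rfl fun l _ => ?_
    rw [map_prod]
    exact Finset.prod_congr rfl fun a ha => factor l a (Finset.mem_erase.mp ha).1
  have rhs_eq : (1 - φ (C u) ^ r) / (1 - φ (C u)) = φ (C ((1 - u ^ r) / (1 - u))) := by
    have h1u : (1 : RatFunc K) - φ (C u) = φ (C (1 - u)) := by
      rw [Polynomial.C_sub, map_sub, Polynomial.C_1, map_one]
    have h1une : (1 : RatFunc K) - φ (C u) ≠ 0 := by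
      rw [h1u]
      intro hc
      have := hφ (by rw [hc, map_zero] : φ (C (1 - u)) = φ 0)
      rw [Polynomial.C_eq_zero, sub_eq_zero] at this
      exact hu this.symm
    rw [div_eq_iff h1une, h1u, ← map_mul, ← Polynomial.C_mul,
      div_mul_cancel₀ _ (sub_ne_zero_of_ne (Ne.symm hu))]
    rw [show (1 : RatFunc K) - φ (C u) ^ r = φ (C (1 - u ^ r)) by
      rw [Polynomial.C_sub, map_sub, Polynomial.C_1, map_one, Polynomial.C_pow, map_pow]]
  rw [lhs_eq, rhs_eq] at KEY
  have poly_eq := hφ KEY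
  have ev := congrArg (Polynomial.eval 0) poly_eq
  rw [Polynomial.eval_finset_sum, Polynomial.eval_C] at ev
  rw [← ev]
  refine Finset.sum_congr rfl fun l _ => ?_
  rw [Polynomial.eval_prod]
  refine Finset.prod_congr rfl fun a ha => ?_
  rw [hqdef]
  simp only [Polynomial.eval_mul, Polynomial.eval_sub, Polynomial.eval_add, Polynomial.eval_X,
    Polynomial.eval_C, zero_add]
  rw [div_eq_mul_inv]
end

section
/- Let K be a field, r ≥ 1 an integer, χ_1, …, χ_r pairwise distinct nonzero elements of K, and u ∈ K. Then Σ_{l=1}^{r} χ_l⁻¹ · ∏_{a≠l} (χ_l − u·χ_a)/(χ_l − χ_a) = u^{r−1} · Σ_{l=1}^{r} χ_l⁻¹. -/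
/-!
Substituting `v = χ⁻¹` turns each factor into `(u v_l - v_a) / (v_l - v_a)`. For `u ≠ 1`, `(u - 1)`
times the left-hand side is then the divided difference of `f(x) = ∏_a (u x - v_a)` at the nodes
`v_a`. For a polynomial of degree at most `r` this divided difference equals
`c_{r-1} + c_r ∑_a v_a`, and here `c_r = u ^ r`, `c_{r-1} = -u ^ (r - 1) ∑_a v_a`.
-/

open Polynomial Finset

namespace Lagrange

variable {F ι : Type*} [Field F] {s : Finset ι} {v : ι → F}

theorem coeff_card_nodal : (nodal s v).coeff #s = 1 :=
  natDegree_nodal (v := v) ▸ nodal_monic.coeff_natDegree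

variable [DecidableEq ι]

/-- Subtracting `P.coeff #s • nodal s v` reduces this to `Lagrange.coeff_eq_sum`. -/
theorem sum_eval_div_prod_sub_eq_of_natDegree_le (hvs : Set.InjOn v s) (hs : s.Nonempty)
    {P : F[X]} (hP : P.natDegree ≤ #s) :
    ∑ i ∈ s, P.eval (v i) / ∏ j ∈ s.erase i, (v i - v j)
      = P.coeff (#s - 1) + P.coeff #s * ∑ i ∈ s, v i := by
  set Q := P - C (P.coeff #s) * nodal s v
  have hQ : Q.degree < #s := by
    refine (degree_lt_iff_coeff_zero _ _).mpr fun m hm => ?_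
    rcases hm.eq_or_lt with rfl | hlt
    · simp [Q, coeff_card_nodal]
    · simp [Q, coeff_eq_zero_of_natDegree_lt (hP.trans_lt hlt),
        coeff_eq_zero_of_natDegree_lt (natDegree_nodal (v := v) ▸ hlt)]
  have hQ_coeff : Q.coeff (#s - 1) = P.coeff (#s - 1) + P.coeff #s * ∑ i ∈ s, v i := by
    simp [Q, nodal_eq, prod_X_sub_C_coeff_card_pred _ _ hs.card_pos]
  rw [← hQ_coeff, coeff_eq_sum hvs hQ]
  refine sum_congr rfl fun i hi => ?_
  simp [Q, eval_nodal_at_node hi]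

theorem sum_mul_prod_mul_sub_div_sub (hvs : Set.InjOn v s) (u : F) :
    ∑ l ∈ s, v l * ∏ a ∈ s.erase l, (u * v l - v a) / (v l - v a)
      = u ^ (#s - 1) * ∑ l ∈ s, v l := by
  rcases s.eq_empty_or_nonempty with rfl | hs
  · simp
  have hsub : ∀ l ∈ s, ∀ a ∈ s.erase l, v l - v a ≠ 0 := fun l hl a ha =>
    sub_ne_zero.mpr fun h => ne_of_mem_erase ha (hvs (mem_of_mem_erase ha) hl h.symm)
  rcases eq_or_ne u 1 with rfl | hu
  · rw [one_pow, one_mul]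
    refine sum_congr rfl fun l hl => ?_
    rw [prod_congr rfl fun a ha => by rw [one_mul, div_self (hsub l hl a ha)], prod_const_one,
      mul_one]
  set P := (nodal s v).comp (C u * X)
  have hP_eval : ∀ l ∈ s, P.eval (v l)
      = (u - 1) * (v l * ∏ a ∈ s.erase l, (u * v l - v a)) := by
    intro l hl
    rw [eval_comp, eval_nodal, ← mul_prod_erase s _ hl]
    simp only [eval_mul, eval_C, eval_X]
    ring
  have hP_deg : P.natDegree ≤ #s := by
    refine natDegree_le_iff_coeff_eq_zero.mpr fun m hm => ?_
    rw [comp_C_mul_X_coeff, coeff_eq_zero_of_natDegree_lt (natDegree_nodal (v := v) ▸ hm),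
      zero_mul]
  have hdd := sum_eval_div_prod_sub_eq_of_natDegree_le hvs hs hP_deg
  have hn : #s = #s - 1 + 1 := (Nat.sub_add_cancel hs.card_pos).symm
  rw [comp_C_mul_X_coeff, comp_C_mul_X_coeff, coeff_card_nodal, nodal_eq,
    prod_X_sub_C_coeff_card_pred _ _ hs.card_pos] at hdd
  refine mul_left_cancel₀ (sub_ne_zero.mpr hu) ?_
  calc (u - 1) * ∑ l ∈ s, v l * ∏ a ∈ s.erase l, (u * v l - v a) / (v l - v a)
      = ∑ l ∈ s, P.eval (v l) / ∏ a ∈ s.erase l, (v l - v a) := by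
        rw [mul_sum]
        refine sum_congr rfl fun l hl => ?_
        rw [hP_eval l hl, prod_div_distrib, mul_div_assoc, mul_div_assoc]
    _ = (u - 1) * (u ^ (#s - 1) * ∑ l ∈ s, v l) := by
        rw [hdd, hn, pow_succ, Nat.add_sub_cancel]
        ring

end Lagrange

theorem sum_inv_prod_ratio_eq_general {K : Type*} [Field K] (r : ℕ)
    (χ : Fin r → K) (hχ : Function.Injective χ) (hχ0 : ∀ l, χ l ≠ 0) (u : K) :
    ∑ l : Fin r, (χ l)⁻¹ * ∏ a ∈ Finset.univ.erase l, (χ l - u * χ a) / (χ l - χ a)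
      = u ^ (r - 1) * ∑ l : Fin r, (χ l)⁻¹ := by
  have key := Lagrange.sum_mul_prod_mul_sub_div_sub (s := univ)
    (v := fun l => (χ l)⁻¹) (inv_injective.comp hχ).injOn u
  rw [card_univ, Fintype.card_fin] at key
  rw [← key]
  refine sum_congr rfl fun l _ => congrArg _ (prod_congr rfl fun a _ => ?_)
  field_simp [hχ0 l, hχ0 a]
  rw [← neg_sub (χ l), ← neg_sub (χ l) (χ a), neg_div_neg_eq]

/-- For a field `K`, `r ≥ 1`, pairwise distinct nonzero `χ_1, …, χ_r ∈ K`
and `u ∈ K`, one has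
`Σ_{l=1}^{r} χ_l⁻¹ ∏_{a≠l} (χ_l − u·χ_a)/(χ_l − χ_a) = u^{r−1} · Σ_{l=1}^{r} χ_l⁻¹`. -/
theorem sum_inv_prod_ratio_eq {K : Type*} [Field K] (r : ℕ) (hr : 1 ≤ r)
    (χ : Fin r → K) (hχ : Function.Injective χ) (hχ0 : ∀ l, χ l ≠ 0) (u : K) :
    ∑ l : Fin r, (χ l)⁻¹ * ∏ a ∈ Finset.univ.erase l, (χ l - u * χ a) / (χ l - χ a)
      = u ^ (r - 1) * ∑ l : Fin r, (χ l)⁻¹ :=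
  sum_inv_prod_ratio_eq_general r χ hχ hχ0 u
end

section
/- Let K be a field, r ≥ 1 an integer, χ_1, …, χ_r pairwise distinct nonzero elements of K, z ∈ K nonzero with χ_l·z ≠ 1 for all l, and u ∈ K. Then 1 − (1 − u)·Σ_{l=1}^{r} (1/(1 − 1/(χ_l·z))) · ∏_{a≠l} (χ_l − u·χ_a)/(χ_l − χ_a) = ∏_{l=1}^{r} (u − 1/(χ_l·z))/(1 − 1/(χ_l·z)). -/
/-!
With `w = z⁻¹` each factor on the right is `(w - u χ_l) / (w - χ_l)`, so the right-hand side is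
the rational function `P(w) / Q(w)` with `P = ∏ (X - u χ_l)` and `Q = ∏ (X - χ_l)`. Both are monic
of degree `r`, so `P - Q` has degree `< r` and equals its Lagrange interpolant at the nodes `χ_l`,
where it takes the values `P(χ_l)`. Dividing by `Q(w)` gives the partial fraction expansion
`P(w) / Q(w) = 1 + ∑_l P(χ_l) / (Q'(χ_l) (w - χ_l))`, and the residues
`P(χ_l) / Q'(χ_l) = (1 - u) χ_l ∏_{a ≠ l} (χ_l - u χ_a) / (χ_l - χ_a)` give the left-hand side.
-/

open Finset Polynomial

namespace Lagrange

variable {F ι : Type*} [Field F] [DecidableEq ι] {s : Finset ι} {v : ι → F}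

theorem eq_nodal_add_interpolate (hvs : Set.InjOn v s) {p : F[X]} (hp : p.Monic)
    (hdeg : p.natDegree = #s) :
    p = nodal s v + interpolate s v fun i => p.eval (v i) := by
  have hp_deg : p.degree = #s := by rw [degree_eq_natDegree hp.ne_zero, hdeg]
  have hlc : p.leadingCoeff = (nodal s v).leadingCoeff :=
    hp.leadingCoeff.trans nodal_monic.leadingCoeff.symm
  have hdeg_sub : (p - nodal s v).degree < #s :=
    hp_deg ▸ degree_sub_lt_left (hp_deg.trans degree_nodal.symm) hp.ne_zero hlc
  rw [← sub_eq_iff_eq_add']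
  exact eq_interpolate_of_eval_eq _ hvs hdeg_sub fun i hi => by
    rw [eval_sub, eval_nodal_at_node hi, sub_zero]

theorem eval_div_eval_nodal (hvs : Set.InjOn v s) {p : F[X]} (hp : p.Monic)
    (hdeg : p.natDegree = #s) {x : F} (hx : ∀ i ∈ s, x ≠ v i) :
    p.eval x / (nodal s v).eval x = 1 + ∑ i ∈ s, nodalWeight s v i * p.eval (v i) / (x - v i) := by
  have hQ : (nodal s v).eval x ≠ 0 := eval_nodal_not_at_node hx
  conv_lhs => rw [eq_nodal_add_interpolate hvs hp hdeg]
  rw [eval_add, eval_interpolate_not_at_node _ hx, add_div, div_self hQ,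
    mul_div_cancel_left₀ _ hQ]
  congr 1
  exact sum_congr rfl fun i _ => by ring

theorem nodalWeight_mul_eval_nodal_mul {i : ι} (hi : i ∈ s) (u : F) :
    nodalWeight s v i * (nodal s fun j => u * v j).eval (v i) =
      (1 - u) * v i * ∏ j ∈ s.erase i, (v i - u * v j) / (v i - v j) := by
  rw [nodalWeight, eval_nodal, ← mul_prod_erase s _ hi]
  simp_rw [div_eq_mul_inv, prod_mul_distrib]
  ring

end Lagrange

open Lagrange in
theorem one_sub_mul_sum_prod_eq_prod {K ι : Type*} [Field K] [Fintype ι] [DecidableEq ι]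
    {χ : ι → K} (hχ : Function.Injective χ) (hχ0 : ∀ l, χ l ≠ 0) {w : K} (hw : ∀ l, w ≠ χ l)
    (u : K) :
    1 - (1 - u) * ∑ l, 1 / (1 - w / χ l) * ∏ a ∈ univ.erase l, (χ l - u * χ a) / (χ l - χ a)
      = ∏ l, (u - w / χ l) / (1 - w / χ l) := by
  have hwχ (l) : w - χ l ≠ 0 := sub_ne_zero.mpr (hw l)
  have hχw (l) : χ l - w ≠ 0 := sub_ne_zero.mpr (hw l).symm
  have hpartial := eval_div_eval_nodal (p := nodal univ fun a => u * χ a) hχ.injOn nodal_monic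
    natDegree_nodal fun l _ => hw l
  rw [eval_nodal, eval_nodal, ← prod_div_distrib] at hpartial
  simp_rw [nodalWeight_mul_eval_nodal_mul (mem_univ _)] at hpartial
  have hfactor (l) : (u - w / χ l) / (1 - w / χ l) = (w - u * χ l) / (w - χ l) := by
    field_simp [hχ0 l, hwχ l, hχw l]
    ring
  have hresidue (l) (P : K) :
      (1 - u) * χ l * P / (w - χ l) = -((1 - u) * (1 / (1 - w / χ l) * P)) := by
    field_simp [hχ0 l, hwχ l, hχw l]
    ring
  simp_rw [hfactor, hpartial, hresidue, sum_neg_distrib, mul_sum]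
  ring

theorem one_sub_sum_prod_ratio_eq_general {K : Type*} [Field K] (r : ℕ)
    (χ : Fin r → K) (hχ : Function.Injective χ) (hχ0 : ∀ l, χ l ≠ 0)
    (z : K) (hχz : ∀ l, χ l * z ≠ 1) (u : K) :
    1 - (1 - u) * ∑ l : Fin r, (1 / (1 - 1 / (χ l * z))) *
        ∏ a ∈ Finset.univ.erase l, (χ l - u * χ a) / (χ l - χ a)
      = ∏ l : Fin r, (u - 1 / (χ l * z)) / (1 - 1 / (χ l * z)) := by
  have hw (l) : z⁻¹ ≠ χ l := fun h => hχz l <| by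
    rw [← h, inv_mul_cancel₀ (inv_eq_zero.not.mp (h.symm ▸ hχ0 l))]
  have hdiv (l) : 1 / (χ l * z) = z⁻¹ / χ l := by
    rw [one_div, mul_inv, div_eq_mul_inv, mul_comm]
  simp_rw [hdiv]
  exact one_sub_mul_sum_prod_eq_prod hχ hχ0 hw u

/-- For a field `K`, `r ≥ 1`, pairwise distinct nonzero `χ_1, …, χ_r ∈ K`,
`z ∈ K` nonzero with `χ_l·z ≠ 1` for all `l`, and `u ∈ K`:
`1 − (1−u)·Σ_l (1/(1 − 1/(χ_l z))) ∏_{a≠l} (χ_l − u χ_a)/(χ_l − χ_a)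
  = ∏_l (u − 1/(χ_l z))/(1 − 1/(χ_l z))`. -/
theorem one_sub_sum_prod_ratio_eq {K : Type*} [Field K] (r : ℕ) (hr : 1 ≤ r)
    (χ : Fin r → K) (hχ : Function.Injective χ) (hχ0 : ∀ l, χ l ≠ 0)
    (z : K) (hz : z ≠ 0) (hχz : ∀ l, χ l * z ≠ 1) (u : K) :
    1 - (1 - u) * ∑ l : Fin r, (1 / (1 - 1 / (χ l * z))) *
        ∏ a ∈ Finset.univ.erase l, (χ l - u * χ a) / (χ l - χ a)
      = ∏ l : Fin r, (u - 1 / (χ l * z)) / (1 - 1 / (χ l * z)) :=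
  one_sub_sum_prod_ratio_eq_general r χ hχ hχ0 z hχz u
end

section
/- Let K be a field, r ≥ 1 an integer, x_1, …, x_r pairwise distinct elements of K, z ∈ K with z + x_j ≠ 0 for all j, and u ∈ K. Then 1 + u·Σ_{l=1}^{r} (1/(z + x_l)) · ∏_{a≠l} (x_l − x_a − u)/(x_l − x_a) = ∏_{j=1}^{r} (z + x_j + u)/(z + x_j). -/
open Polynomial Finset

/-- For a field `K`, `r ≥ 1`, pairwise distinct `x_1, …, x_r ∈ K`,
`z ∈ K` with `z + x_j ≠ 0` for all `j`, and `u ∈ K`: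
`1 + u·Σ_l (1/(z+x_l)) ∏_{a≠l} (x_l − x_a − u)/(x_l − x_a) = ∏_j (z+x_j+u)/(z+x_j)`. -/
theorem one_add_sum_prod_ratio_eq {K : Type*} [Field K] (r : ℕ) (hr : 1 ≤ r)
    (x : Fin r → K) (hx : Function.Injective x)
    (z : K) (hz : ∀ j, z + x j ≠ 0) (u : K) :
    1 + u * ∑ l : Fin r, (1 / (z + x l)) *
        ∏ a ∈ Finset.univ.erase l, (x l - x a - u) / (x l - x a)
      = ∏ j : Fin r, (z + x j + u) / (z + x j) := by
  classical
  have hxne : ∀ {l a : Fin r}, a ≠ l → x l - x a ≠ 0 := by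
    intro l a h
    exact sub_ne_zero_of_ne fun he => h (hx he).symm
  set v : Fin r → K := fun i => -(x i) with hv
  have hvs : Set.InjOn v (Finset.univ : Finset (Fin r)) := by
    intro a _ b _ h
    exact hx (neg_inj.mp h)
  set p : K[X] := ∏ j : Fin r, (X + C (x j + u)) with hpdef
  set q : K[X] := ∏ j : Fin r, (X + C (x j)) with hqdef
  have hpm : p.Monic := monic_prod_of_monic _ _ fun _ _ => monic_X_add_C _
  have hqm : q.Monic := monic_prod_of_monic _ _ fun _ _ => monic_X_add_C _
  have hpnat : p.natDegree = r := by
    rw [hpdef, natDegree_prod _ _ fun i _ => (monic_X_add_C _).ne_zero]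
    simp only [natDegree_X_add_C, Finset.sum_const, Finset.card_univ, Fintype.card_fin, smul_eq_mul, mul_one]
  have hqnat : q.natDegree = r := by
    rw [hqdef, natDegree_prod _ _ fun i _ => (monic_X_add_C _).ne_zero]
    simp only [natDegree_X_add_C, Finset.sum_const, Finset.card_univ, Fintype.card_fin, smul_eq_mul, mul_one]
  have hpd : p.degree = (r : WithBot ℕ) := by
    rw [degree_eq_natDegree hpm.ne_zero, hpnat]
  have hqd : q.degree = (r : WithBot ℕ) := by
    rw [degree_eq_natDegree hqm.ne_zero, hqnat]
  have hdeg : (p - q).degree < ((Finset.univ : Finset (Fin r)).card : WithBot ℕ) := by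
    have h1 : (p - q).degree < p.degree :=
      degree_sub_lt (hpd.trans hqd.symm) hpm.ne_zero (hpm.leadingCoeff.trans hqm.leadingCoeff.symm)
    simpa [hpd, Finset.card_univ] using h1
  have hinterp := Lagrange.eq_interpolate (v := v) hvs hdeg
  have heval := congrArg (Polynomial.eval z) hinterp
  rw [Lagrange.interpolate_apply] at heval
  simp only [Polynomial.eval_finset_sum, Polynomial.eval_mul, Polynomial.eval_C,
    Lagrange.basis, Lagrange.basisDivisor, Polynomial.eval_prod, Polynomial.eval_sub,
    Polynomial.eval_add, Polynomial.eval_X, Polynomial.eval_C, hpdef, hqdef, hv] at heval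
  have hB : (∏ j : Fin r, (z + x j)) ≠ 0 := Finset.prod_ne_zero_iff.mpr fun j _ => hz j
  rw [Finset.prod_div_distrib, eq_div_iff hB]
  have hterm : ∀ l : Fin r,
      ((1 / (z + x l)) * ∏ a ∈ Finset.univ.erase l, (x l - x a - u) / (x l - x a))
          * (∏ j : Fin r, (z + x j)) * u
        = ((∏ j : Fin r, (-(x l) + (x j + u))) - ∏ j : Fin r, (-(x l) + x j))
          * ∏ a ∈ Finset.univ.erase l, ((-(x l) - -(x a))⁻¹ * (z - -(x a))) := by
    intro l
    have hzl := hz l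
    have hq0 : (∏ j : Fin r, (-(x l) + x j)) = 0 :=
      Finset.prod_eq_zero (Finset.mem_univ l) (by ring)
    rw [hq0, sub_zero,
      ← Finset.mul_prod_erase Finset.univ (fun j => -(x l) + (x j + u)) (Finset.mem_univ l),
      ← Finset.mul_prod_erase Finset.univ (fun j => z + x j) (Finset.mem_univ l),
      neg_add_cancel_left]
    have hprod : (∏ a ∈ Finset.univ.erase l, ((x l - x a - u) / (x l - x a)))
          * ((∏ a ∈ Finset.univ.erase l, (z + x a)))
        = (∏ a ∈ Finset.univ.erase l, (-(x l) + (x a + u)))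
          * ∏ a ∈ Finset.univ.erase l, ((-(x l) - -(x a))⁻¹ * (z - -(x a))) := by
      rw [← Finset.prod_mul_distrib, ← Finset.prod_mul_distrib]
      refine Finset.prod_congr rfl fun a ha => ?_
      have e1 : -(x l) - -(x a) = -(x l - x a) := by ring
      rw [e1, inv_neg, div_eq_mul_inv]
      ring
    linear_combination u * ((z + x l) * (z + x l)⁻¹) * hprod
      + u * (∏ a ∈ Finset.univ.erase l, (-(x l) + (x a + u)))
          * (∏ a ∈ Finset.univ.erase l, ((-(x l) - -(x a))⁻¹ * (z - -(x a))))
          * (mul_inv_cancel₀ hzl)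
  calc (1 + u * ∑ l : Fin r, (1 / (z + x l)) *
        ∏ a ∈ Finset.univ.erase l, (x l - x a - u) / (x l - x a)) * ∏ j : Fin r, (z + x j)
      = (∏ j : Fin r, (z + x j)) +
          ∑ l : Fin r, ((1 / (z + x l)) * ∏ a ∈ Finset.univ.erase l,
            (x l - x a - u) / (x l - x a)) * (∏ j : Fin r, (z + x j)) * u := by
        rw [add_mul, one_mul, mul_assoc, Finset.sum_mul, Finset.mul_sum]
        congr 1
        exact Finset.sum_congr rfl fun l _ => by ring
    _ = (∏ j : Fin r, (z + x j)) + ((∏ j : Fin r, (z + (x j + u))) - ∏ j : Fin r, (z + x j)) := by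
        rw [Finset.sum_congr rfl fun l _ => hterm l, ← heval]
    _ = ∏ j : Fin r, (z + x j + u) := by
        have h2 : (∏ j : Fin r, (z + (x j + u))) = ∏ j : Fin r, (z + x j + u) :=
          Finset.prod_congr rfl fun j _ => by ring
        rw [h2]; ring
end

section
/- Let n, k, t be integers with t ≥ 1, k ≥ 2 and t + k ≤ n. Then Σ_{l=n−k−t}^{n−t−1} (−1)^l · C(n−2, l) · C(l, n−k−t) · C(n−l−2, t−1) = 0, where C(a,b) denotes the binomial coefficient a choose b. -/
/-!
Put `a = n - k - t` and write `l = a + j`. The three binomial coefficients multiply to the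
multinomial coefficient `(n-2)! / (a! j! (k-1-j)! (t-1)!)`, which regroups as
`C(n-2, a) · C(k+t-2, t-1) · C(k-1, j)`. The sum is therefore a constant multiple of the
alternating sum of the row `k - 1` of Pascal's triangle, which vanishes since `k - 1 ≠ 0`.
-/

open Finset

theorem Nat.add_choose_add_mul_choose (a b j : ℕ) :
    (a + b).choose (a + j) * (a + j).choose a = (a + b).choose a * b.choose j := by
  rw [Nat.choose_mul (Nat.le_add_right a j), Nat.add_sub_cancel_left, Nat.add_sub_cancel_left]

theorem Nat.add_choose_mul_choose_sub (p q j : ℕ) (hj : j ≤ p) :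
    (p + q).choose j * (p + q - j).choose q = (p + q).choose q * p.choose j := by
  rw [← Nat.choose_symm (by omega : j ≤ p + q), Nat.choose_mul (by omega : q ≤ p + q - j),
    Nat.add_sub_cancel, show p + q - j - q = p - j by omega, Nat.choose_symm hj]

theorem Int.alternating_sum_Icc_choose_mul_choose_mul_choose_eq_zero (a p q : ℕ) (hp : p ≠ 0) :
    ∑ l ∈ Icc a (a + p),
      ((-1 : ℤ) ^ l * (a + (p + q)).choose l * l.choose a * (a + (p + q) - l).choose q) = 0 := by
  rw [show Icc a (a + p) = (Finset.range (p + 1)).map (addLeftEmbedding a) by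
    rw [Nat.range_succ_eq_Icc_zero, map_add_left_Icc, add_zero], sum_map]
  calc
    _ = ∑ j ∈ Finset.range (p + 1), (-1 : ℤ) ^ a * (a + (p + q)).choose a * (p + q).choose q *
          ((-1) ^ j * p.choose j) := by
      refine sum_congr rfl fun j hj => ?_
      have hjp : j ≤ p := Nat.lt_succ_iff.mp (mem_range.mp hj)
      have h : (a + (p + q)).choose (a + j) * (a + j).choose a * (p + q - j).choose q =
          (a + (p + q)).choose a * (p + q).choose q * p.choose j := by
        rw [Nat.add_choose_add_mul_choose, mul_assoc, Nat.add_choose_mul_choose_sub p q j hjp,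
          mul_assoc]
      zify at h
      simp only [addLeftEmbedding_apply, Nat.add_sub_add_left, pow_add]
      linear_combination (-1 : ℤ) ^ a * (-1) ^ j * h
    _ = 0 := by rw [← mul_sum, Int.alternating_sum_range_choose_of_ne hp, mul_zero]

/-- For integers `n, k, t` with `t ≥ 1`, `k ≥ 2` and `t + k ≤ n`,
`Σ_{l=n−k−t}^{n−t−1} (−1)^l · C(n−2,l) · C(l,n−k−t) · C(n−l−2,t−1) = 0`. -/
theorem alternating_triple_binomial_sum_eq_zero (n k t : ℕ)
    (ht : 1 ≤ t) (hk : 2 ≤ k) (hn : t + k ≤ n) :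
    ∑ l ∈ Finset.Icc (n - k - t) (n - t - 1),
      ((-1 : ℤ) ^ l * (n - 2).choose l * l.choose (n - k - t) * (n - l - 2).choose (t - 1))
      = 0 := by
  rw [show n - t - 1 = n - k - t + (k - 1) by omega]
  simp_rw [Nat.sub_right_comm n _ 2, show n - 2 = n - k - t + (k - 1 + (t - 1)) by omega]
  exact Int.alternating_sum_Icc_choose_mul_choose_mul_choose_eq_zero _ _ _ (by omega)
end

section
/- Let h1 ∈ ℂ with h1 ≠ 0, let h2 ∈ ℂ, set h3 = −h1−h2, σ2 = h1h2 + h1h3 + h2h3, σ3 = h1h2h3, and let u ∈ ℂ. Let W be the free ℂ-vector space with basis {v_i}_{i∈ℤ}, and define linear operators on W for j ≥ 0 by e_j(v_i) = (1/h1)·(u + i·h1)^j·v_{i+1} and f_j(v_i) = −(1/h1)·(u + (i−1)·h1)^j·v_{i−1}, and set ψ_k := [e_k, f_0]. Then these operators satisfy all of the affine Yangian relations (Y0)–(Y6) listed in the context; in particular ψ_0 = 0 and ψ_1 = (1/h1)·id, so this vector representation has central charge (0, 1/h1). -/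
noncomputable section

namespace VectorRep

/-- The vector representation space: the free `ℂ`-vector space with basis `{v_i}_{i∈ℤ}`. -/
abbrev W : Type := ℤ →₀ ℂ

/-- `e_j(v_i) = (1/h1)·(u + i·h1)^j · v_{i+1}`. -/
def eOp (h1 u : ℂ) (j : ℕ) : Module.End ℂ W :=
  Finsupp.lsum ℂ fun i : ℤ => LinearMap.toSpanSingleton ℂ W
    (Finsupp.single (i + 1) ((1 / h1) * (u + (i : ℂ) * h1) ^ j))

/-- `f_j(v_i) = −(1/h1)·(u + (i−1)·h1)^j · v_{i−1}`. -/
def fOp (h1 u : ℂ) (j : ℕ) : Module.End ℂ W :=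
  Finsupp.lsum ℂ fun i : ℤ => LinearMap.toSpanSingleton ℂ W
    (Finsupp.single (i - 1) (-(1 / h1) * (u + ((i : ℂ) - 1) * h1) ^ j))

/-- `ψ_k := [e_k, f_0]`. -/
def psiOp (h1 u : ℂ) (k : ℕ) : Module.End ℂ W :=
  eOp h1 u k * fOp h1 u 0 - fOp h1 u 0 * eOp h1 u k

end VectorRep

namespace VectorRep

lemma eOp_single (h1 u : ℂ) (j : ℕ) (n : ℤ) (c : ℂ) :
    eOp h1 u j (Finsupp.single n c) =
      Finsupp.single (n + 1) (c * ((1 / h1) * (u + (n : ℂ) * h1) ^ j)) := by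
  simp only [eOp, Finsupp.lsum_single, LinearMap.toSpanSingleton_apply,
    Finsupp.smul_single, smul_eq_mul]

lemma fOp_single (h1 u : ℂ) (j : ℕ) (n : ℤ) (c : ℂ) :
    fOp h1 u j (Finsupp.single n c) =
      Finsupp.single (n - 1) (c * (-(1 / h1) * (u + ((n : ℂ) - 1) * h1) ^ j)) := by
  simp only [fOp, Finsupp.lsum_single, LinearMap.toSpanSingleton_apply,
    Finsupp.smul_single, smul_eq_mul]

lemma psiOp_single (h1 u : ℂ) (k : ℕ) (n : ℤ) (c : ℂ) :
    psiOp h1 u k (Finsupp.single n c) =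
      Finsupp.single n (c * ((1/h1) * (1/h1) *
        ((u + (n : ℂ) * h1) ^ k - (u + ((n : ℂ) - 1) * h1) ^ k))) := by
  simp only [psiOp, LinearMap.sub_apply, Module.End.mul_apply, eOp_single, fOp_single,
    sub_add_cancel, add_sub_cancel_right]
  rw [← Finsupp.single_sub]
  congr 1
  push_cast
  ring

end VectorRep

open VectorRep

/-- The vector representation of the affine Yangian of `gl_1`:
with `h1 ≠ 0`, `h3 = −h1−h2`, `σ2 = h1h2+h1h3+h2h3`, `σ3 = h1h2h3`, the operators
`e_j, f_j, ψ_k = [e_k,f_0]` on `W` satisfy the relations (Y0)–(Y6); moreover `ψ_0 = 0`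
and `ψ_1 = (1/h1)·id`, so the representation has central charge `(0, 1/h1)`. -/
theorem vector_representation_affine_yangian (h1 h2 u : ℂ) (hh1 : h1 ≠ 0) :
    ∀ h3 σ2 σ3 : ℂ, h3 = -h1 - h2 → σ2 = h1*h2 + h1*h3 + h2*h3 → σ3 = h1*h2*h3 →
    -- (Y0)
    (∀ i j : ℕ, psiOp h1 u i * psiOp h1 u j - psiOp h1 u j * psiOp h1 u i = 0) ∧
    -- (Y1)
    (∀ i j : ℕ,
      (eOp h1 u (i+3) * eOp h1 u j - eOp h1 u j * eOp h1 u (i+3))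
        - 3 • (eOp h1 u (i+2) * eOp h1 u (j+1) - eOp h1 u (j+1) * eOp h1 u (i+2))
        + 3 • (eOp h1 u (i+1) * eOp h1 u (j+2) - eOp h1 u (j+2) * eOp h1 u (i+1))
        - (eOp h1 u i * eOp h1 u (j+3) - eOp h1 u (j+3) * eOp h1 u i)
        + σ2 • ((eOp h1 u (i+1) * eOp h1 u j - eOp h1 u j * eOp h1 u (i+1))
            - (eOp h1 u i * eOp h1 u (j+1) - eOp h1 u (j+1) * eOp h1 u i))
      = σ3 • (eOp h1 u i * eOp h1 u j + eOp h1 u j * eOp h1 u i)) ∧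
    -- (Y2)
    (∀ i j : ℕ,
      (fOp h1 u (i+3) * fOp h1 u j - fOp h1 u j * fOp h1 u (i+3))
        - 3 • (fOp h1 u (i+2) * fOp h1 u (j+1) - fOp h1 u (j+1) * fOp h1 u (i+2))
        + 3 • (fOp h1 u (i+1) * fOp h1 u (j+2) - fOp h1 u (j+2) * fOp h1 u (i+1))
        - (fOp h1 u i * fOp h1 u (j+3) - fOp h1 u (j+3) * fOp h1 u i)
        + σ2 • ((fOp h1 u (i+1) * fOp h1 u j - fOp h1 u j * fOp h1 u (i+1))
            - (fOp h1 u i * fOp h1 u (j+1) - fOp h1 u (j+1) * fOp h1 u i))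
      = (-σ3) • (fOp h1 u i * fOp h1 u j + fOp h1 u j * fOp h1 u i)) ∧
    -- (Y3)
    (∀ i j : ℕ,
      eOp h1 u i * fOp h1 u j - fOp h1 u j * eOp h1 u i = psiOp h1 u (i + j)) ∧
    -- (Y4)
    (∀ i j : ℕ,
      (psiOp h1 u (i+3) * eOp h1 u j - eOp h1 u j * psiOp h1 u (i+3))
        - 3 • (psiOp h1 u (i+2) * eOp h1 u (j+1) - eOp h1 u (j+1) * psiOp h1 u (i+2))
        + 3 • (psiOp h1 u (i+1) * eOp h1 u (j+2) - eOp h1 u (j+2) * psiOp h1 u (i+1))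
        - (psiOp h1 u i * eOp h1 u (j+3) - eOp h1 u (j+3) * psiOp h1 u i)
        + σ2 • ((psiOp h1 u (i+1) * eOp h1 u j - eOp h1 u j * psiOp h1 u (i+1))
            - (psiOp h1 u i * eOp h1 u (j+1) - eOp h1 u (j+1) * psiOp h1 u i))
      = σ3 • (psiOp h1 u i * eOp h1 u j + eOp h1 u j * psiOp h1 u i)) ∧
    -- (Y4′)
    (∀ j : ℕ, psiOp h1 u 0 * eOp h1 u j - eOp h1 u j * psiOp h1 u 0 = 0) ∧
    (∀ j : ℕ, psiOp h1 u 1 * eOp h1 u j - eOp h1 u j * psiOp h1 u 1 = 0) ∧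
    (∀ j : ℕ, psiOp h1 u 2 * eOp h1 u j - eOp h1 u j * psiOp h1 u 2 = 2 • eOp h1 u j) ∧
    -- (Y5)
    (∀ i j : ℕ,
      (psiOp h1 u (i+3) * fOp h1 u j - fOp h1 u j * psiOp h1 u (i+3))
        - 3 • (psiOp h1 u (i+2) * fOp h1 u (j+1) - fOp h1 u (j+1) * psiOp h1 u (i+2))
        + 3 • (psiOp h1 u (i+1) * fOp h1 u (j+2) - fOp h1 u (j+2) * psiOp h1 u (i+1))
        - (psiOp h1 u i * fOp h1 u (j+3) - fOp h1 u (j+3) * psiOp h1 u i)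
        + σ2 • ((psiOp h1 u (i+1) * fOp h1 u j - fOp h1 u j * psiOp h1 u (i+1))
            - (psiOp h1 u i * fOp h1 u (j+1) - fOp h1 u (j+1) * psiOp h1 u i))
      = (-σ3) • (psiOp h1 u i * fOp h1 u j + fOp h1 u j * psiOp h1 u i)) ∧
    -- (Y5′)
    (∀ j : ℕ, psiOp h1 u 0 * fOp h1 u j - fOp h1 u j * psiOp h1 u 0 = 0) ∧
    (∀ j : ℕ, psiOp h1 u 1 * fOp h1 u j - fOp h1 u j * psiOp h1 u 1 = 0) ∧
    (∀ j : ℕ, psiOp h1 u 2 * fOp h1 u j - fOp h1 u j * psiOp h1 u 2 = -(2 • fOp h1 u j)) ∧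
    -- (Y6)
    (∀ i : Fin 3 → ℕ, ∑ σ : Equiv.Perm (Fin 3),
      (eOp h1 u (i (σ 0)) * (eOp h1 u (i (σ 1)) * eOp h1 u (i (σ 2) + 1)
            - eOp h1 u (i (σ 2) + 1) * eOp h1 u (i (σ 1)))
        - (eOp h1 u (i (σ 1)) * eOp h1 u (i (σ 2) + 1)
            - eOp h1 u (i (σ 2) + 1) * eOp h1 u (i (σ 1))) * eOp h1 u (i (σ 0))) = 0) ∧
    (∀ i : Fin 3 → ℕ, ∑ σ : Equiv.Perm (Fin 3),
      (fOp h1 u (i (σ 0)) * (fOp h1 u (i (σ 1)) * fOp h1 u (i (σ 2) + 1)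
            - fOp h1 u (i (σ 2) + 1) * fOp h1 u (i (σ 1)))
        - (fOp h1 u (i (σ 1)) * fOp h1 u (i (σ 2) + 1)
            - fOp h1 u (i (σ 2) + 1) * fOp h1 u (i (σ 1))) * fOp h1 u (i (σ 0))) = 0) ∧
    -- central charge (0, 1/h1)
    psiOp h1 u 0 = 0 ∧
    psiOp h1 u 1 = (1 / h1) • (1 : Module.End ℂ W) := by
  intro h3 σ2 σ3 e3 eσ2 eσ3
  subst e3 eσ2 eσ3
  refine ⟨?_, ?_, ?_, ?_, ?_, ?_, ?_, ?_, ?_, ?_, ?_, ?_, ?_, ?_, ?_, ?_⟩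
  · intro i j
    apply Finsupp.lhom_ext ; intro n c
    simp only [LinearMap.sub_apply, LinearMap.add_apply, LinearMap.smul_apply,
      LinearMap.neg_apply, Module.End.mul_apply, Module.End.one_apply, map_sub, map_add,
      eOp_single, fOp_single, psiOp_single, LinearMap.zero_apply,
      sub_add_cancel, add_sub_cancel_right]
    simp only [Finsupp.smul_single, smul_eq_mul, nsmul_eq_mul, ← Finsupp.single_neg,
      ← Finsupp.single_add, ← Finsupp.single_sub]
    rw [Finsupp.single_eq_zero]
    push_cast
    ring
  · intro i j
    apply Finsupp.lhom_ext ; intro n c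
    simp only [LinearMap.sub_apply, LinearMap.add_apply, LinearMap.smul_apply,
      LinearMap.neg_apply, Module.End.mul_apply, Module.End.one_apply, map_sub, map_add,
      eOp_single, fOp_single, psiOp_single, LinearMap.zero_apply,
      sub_add_cancel, add_sub_cancel_right]
    simp only [Finsupp.smul_single, smul_eq_mul, nsmul_eq_mul, ← Finsupp.single_neg,
      ← Finsupp.single_add, ← Finsupp.single_sub]
    congr 1
    push_cast
    ring
  · intro i j
    apply Finsupp.lhom_ext ; intro n c
    simp only [LinearMap.sub_apply, LinearMap.add_apply, LinearMap.smul_apply,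
      LinearMap.neg_apply, Module.End.mul_apply, Module.End.one_apply, map_sub, map_add,
      eOp_single, fOp_single, psiOp_single, LinearMap.zero_apply,
      sub_add_cancel, add_sub_cancel_right]
    simp only [Finsupp.smul_single, smul_eq_mul, nsmul_eq_mul, ← Finsupp.single_neg,
      ← Finsupp.single_add, ← Finsupp.single_sub]
    congr 1
    push_cast
    ring
  · intro i j
    apply Finsupp.lhom_ext ; intro n c
    simp only [LinearMap.sub_apply, LinearMap.add_apply, LinearMap.smul_apply,
      LinearMap.neg_apply, Module.End.mul_apply, Module.End.one_apply, map_sub, map_add,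
      eOp_single, fOp_single, psiOp_single, LinearMap.zero_apply,
      sub_add_cancel, add_sub_cancel_right]
    simp only [Finsupp.smul_single, smul_eq_mul, nsmul_eq_mul, ← Finsupp.single_neg,
      ← Finsupp.single_add, ← Finsupp.single_sub]
    congr 1
    push_cast
    ring
  · intro i j
    apply Finsupp.lhom_ext ; intro n c
    simp only [LinearMap.sub_apply, LinearMap.add_apply, LinearMap.smul_apply,
      LinearMap.neg_apply, Module.End.mul_apply, Module.End.one_apply, map_sub, map_add,
      eOp_single, fOp_single, psiOp_single, LinearMap.zero_apply,
      sub_add_cancel, add_sub_cancel_right]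
    simp only [Finsupp.smul_single, smul_eq_mul, nsmul_eq_mul, ← Finsupp.single_neg,
      ← Finsupp.single_add, ← Finsupp.single_sub]
    congr 1
    push_cast
    ring
  · intro j
    apply Finsupp.lhom_ext ; intro n c
    simp only [LinearMap.sub_apply, LinearMap.add_apply, LinearMap.smul_apply,
      LinearMap.neg_apply, Module.End.mul_apply, Module.End.one_apply, map_sub, map_add,
      eOp_single, fOp_single, psiOp_single, LinearMap.zero_apply,
      sub_add_cancel, add_sub_cancel_right]
    simp only [Finsupp.smul_single, smul_eq_mul, nsmul_eq_mul, ← Finsupp.single_neg,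
      ← Finsupp.single_add, ← Finsupp.single_sub]
    rw [Finsupp.single_eq_zero]
    push_cast
    ring
  · intro j
    apply Finsupp.lhom_ext ; intro n c
    simp only [LinearMap.sub_apply, LinearMap.add_apply, LinearMap.smul_apply,
      LinearMap.neg_apply, Module.End.mul_apply, Module.End.one_apply, map_sub, map_add,
      eOp_single, fOp_single, psiOp_single, LinearMap.zero_apply,
      sub_add_cancel, add_sub_cancel_right]
    simp only [Finsupp.smul_single, smul_eq_mul, nsmul_eq_mul, ← Finsupp.single_neg,
      ← Finsupp.single_add, ← Finsupp.single_sub]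
    rw [Finsupp.single_eq_zero]
    push_cast
    ring
  · intro j
    apply Finsupp.lhom_ext ; intro n c
    simp only [LinearMap.sub_apply, LinearMap.add_apply, LinearMap.smul_apply,
      LinearMap.neg_apply, Module.End.mul_apply, Module.End.one_apply, map_sub, map_add,
      eOp_single, fOp_single, psiOp_single, LinearMap.zero_apply,
      sub_add_cancel, add_sub_cancel_right]
    simp only [Finsupp.smul_single, smul_eq_mul, nsmul_eq_mul, ← Finsupp.single_neg,
      ← Finsupp.single_add, ← Finsupp.single_sub]
    congr 1
    push_cast
    field_simp; ring
  · intro i j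
    apply Finsupp.lhom_ext ; intro n c
    simp only [LinearMap.sub_apply, LinearMap.add_apply, LinearMap.smul_apply,
      LinearMap.neg_apply, Module.End.mul_apply, Module.End.one_apply, map_sub, map_add,
      eOp_single, fOp_single, psiOp_single, LinearMap.zero_apply,
      sub_add_cancel, add_sub_cancel_right]
    simp only [Finsupp.smul_single, smul_eq_mul, nsmul_eq_mul, ← Finsupp.single_neg,
      ← Finsupp.single_add, ← Finsupp.single_sub]
    congr 1
    push_cast
    ring
  · intro j
    apply Finsupp.lhom_ext ; intro n c
    simp only [LinearMap.sub_apply, LinearMap.add_apply, LinearMap.smul_apply,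
      LinearMap.neg_apply, Module.End.mul_apply, Module.End.one_apply, map_sub, map_add,
      eOp_single, fOp_single, psiOp_single, LinearMap.zero_apply,
      sub_add_cancel, add_sub_cancel_right]
    simp only [Finsupp.smul_single, smul_eq_mul, nsmul_eq_mul, ← Finsupp.single_neg,
      ← Finsupp.single_add, ← Finsupp.single_sub]
    rw [Finsupp.single_eq_zero]
    push_cast
    ring
  · intro j
    apply Finsupp.lhom_ext ; intro n c
    simp only [LinearMap.sub_apply, LinearMap.add_apply, LinearMap.smul_apply,
      LinearMap.neg_apply, Module.End.mul_apply, Module.End.one_apply, map_sub, map_add,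
      eOp_single, fOp_single, psiOp_single, LinearMap.zero_apply,
      sub_add_cancel, add_sub_cancel_right]
    simp only [Finsupp.smul_single, smul_eq_mul, nsmul_eq_mul, ← Finsupp.single_neg,
      ← Finsupp.single_add, ← Finsupp.single_sub]
    rw [Finsupp.single_eq_zero]
    push_cast
    ring
  · intro j
    apply Finsupp.lhom_ext ; intro n c
    simp only [LinearMap.sub_apply, LinearMap.add_apply, LinearMap.smul_apply,
      LinearMap.neg_apply, Module.End.mul_apply, Module.End.one_apply, map_sub, map_add,
      eOp_single, fOp_single, psiOp_single, LinearMap.zero_apply,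
      sub_add_cancel, add_sub_cancel_right]
    simp only [Finsupp.smul_single, smul_eq_mul, nsmul_eq_mul, ← Finsupp.single_neg,
      ← Finsupp.single_add, ← Finsupp.single_sub]
    congr 1
    push_cast
    field_simp; ring
  · intro i
    rw [show (Finset.univ : Finset (Equiv.Perm (Fin 3))) =
        {1, Equiv.swap 0 1, Equiv.swap 0 2, Equiv.swap 1 2,
          Equiv.swap 0 1 * Equiv.swap 1 2, Equiv.swap 1 2 * Equiv.swap 0 1} from by decide]
    rw [Finset.sum_insert (by decide), Finset.sum_insert (by decide),
      Finset.sum_insert (by decide), Finset.sum_insert (by decide),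
      Finset.sum_insert (by decide), Finset.sum_singleton]
    simp only [show (1 : Equiv.Perm (Fin 3)) 0 = 0 from by decide,
      show (1 : Equiv.Perm (Fin 3)) 1 = 1 from by decide,
      show (1 : Equiv.Perm (Fin 3)) 2 = 2 from by decide,
      show (Equiv.swap (0:Fin 3) 1) 0 = 1 from by decide,
      show (Equiv.swap (0:Fin 3) 1) 1 = 0 from by decide,
      show (Equiv.swap (0:Fin 3) 1) 2 = 2 from by decide,
      show (Equiv.swap (0:Fin 3) 2) 0 = 2 from by decide,
      show (Equiv.swap (0:Fin 3) 2) 1 = 1 from by decide,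
      show (Equiv.swap (0:Fin 3) 2) 2 = 0 from by decide,
      show (Equiv.swap (1:Fin 3) 2) 0 = 0 from by decide,
      show (Equiv.swap (1:Fin 3) 2) 1 = 2 from by decide,
      show (Equiv.swap (1:Fin 3) 2) 2 = 1 from by decide,
      show (Equiv.swap (0:Fin 3) 1 * Equiv.swap 1 2 : Equiv.Perm (Fin 3)) 0 = 1 from by decide,
      show (Equiv.swap (0:Fin 3) 1 * Equiv.swap 1 2 : Equiv.Perm (Fin 3)) 1 = 2 from by decide,
      show (Equiv.swap (0:Fin 3) 1 * Equiv.swap 1 2 : Equiv.Perm (Fin 3)) 2 = 0 from by decide,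
      show (Equiv.swap (1:Fin 3) 2 * Equiv.swap 0 1 : Equiv.Perm (Fin 3)) 0 = 2 from by decide,
      show (Equiv.swap (1:Fin 3) 2 * Equiv.swap 0 1 : Equiv.Perm (Fin 3)) 1 = 0 from by decide,
      show (Equiv.swap (1:Fin 3) 2 * Equiv.swap 0 1 : Equiv.Perm (Fin 3)) 2 = 1 from by decide]
    apply Finsupp.lhom_ext ; intro n c
    simp only [LinearMap.add_apply, LinearMap.sub_apply, Module.End.mul_apply, map_sub,
      map_add, eOp_single, LinearMap.zero_apply]
    simp only [← Finsupp.single_add, ← Finsupp.single_sub]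
    rw [Finsupp.single_eq_zero]
    push_cast
    ring
  · intro i
    rw [show (Finset.univ : Finset (Equiv.Perm (Fin 3))) =
        {1, Equiv.swap 0 1, Equiv.swap 0 2, Equiv.swap 1 2,
          Equiv.swap 0 1 * Equiv.swap 1 2, Equiv.swap 1 2 * Equiv.swap 0 1} from by decide]
    rw [Finset.sum_insert (by decide), Finset.sum_insert (by decide),
      Finset.sum_insert (by decide), Finset.sum_insert (by decide),
      Finset.sum_insert (by decide), Finset.sum_singleton]
    simp only [show (1 : Equiv.Perm (Fin 3)) 0 = 0 from by decide,
      show (1 : Equiv.Perm (Fin 3)) 1 = 1 from by decide,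
      show (1 : Equiv.Perm (Fin 3)) 2 = 2 from by decide,
      show (Equiv.swap (0:Fin 3) 1) 0 = 1 from by decide,
      show (Equiv.swap (0:Fin 3) 1) 1 = 0 from by decide,
      show (Equiv.swap (0:Fin 3) 1) 2 = 2 from by decide,
      show (Equiv.swap (0:Fin 3) 2) 0 = 2 from by decide,
      show (Equiv.swap (0:Fin 3) 2) 1 = 1 from by decide,
      show (Equiv.swap (0:Fin 3) 2) 2 = 0 from by decide,
      show (Equiv.swap (1:Fin 3) 2) 0 = 0 from by decide,
      show (Equiv.swap (1:Fin 3) 2) 1 = 2 from by decide,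
      show (Equiv.swap (1:Fin 3) 2) 2 = 1 from by decide,
      show (Equiv.swap (0:Fin 3) 1 * Equiv.swap 1 2 : Equiv.Perm (Fin 3)) 0 = 1 from by decide,
      show (Equiv.swap (0:Fin 3) 1 * Equiv.swap 1 2 : Equiv.Perm (Fin 3)) 1 = 2 from by decide,
      show (Equiv.swap (0:Fin 3) 1 * Equiv.swap 1 2 : Equiv.Perm (Fin 3)) 2 = 0 from by decide,
      show (Equiv.swap (1:Fin 3) 2 * Equiv.swap 0 1 : Equiv.Perm (Fin 3)) 0 = 2 from by decide,
      show (Equiv.swap (1:Fin 3) 2 * Equiv.swap 0 1 : Equiv.Perm (Fin 3)) 1 = 0 from by decide,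
      show (Equiv.swap (1:Fin 3) 2 * Equiv.swap 0 1 : Equiv.Perm (Fin 3)) 2 = 1 from by decide]
    apply Finsupp.lhom_ext ; intro n c
    simp only [LinearMap.add_apply, LinearMap.sub_apply, Module.End.mul_apply, map_sub,
      map_add, fOp_single, LinearMap.zero_apply]
    simp only [← Finsupp.single_add, ← Finsupp.single_sub]
    rw [Finsupp.single_eq_zero]
    push_cast
    ring
  · apply Finsupp.lhom_ext ; intro n c
    simp only [psiOp_single, pow_zero, LinearMap.zero_apply, sub_self, mul_zero,
      Finsupp.single_zero]
  · apply Finsupp.lhom_ext ; intro n c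
    simp only [psiOp_single, LinearMap.smul_apply, Module.End.one_apply,
      Finsupp.smul_single, smul_eq_mul]
    congr 1
    field_simp
    ring


end
end

section
/- Let (k1,l1), (k2,l2) ∈ ℤ² with gcd(k1,l1) = gcd(k2,l2) = 1 and k1·l2 − k2·l1 > 0. Assume that no point of ℤ² lies in the interior of the triangle in ℝ² with vertices (0,0), (k1,l1) and (k1+k2, l1+l2). Then k1·l2 − k2·l1 = gcd(k1+k2, l1+l2). Consequently, f(k1,l1) + f(k2,l2) + k2·l1 = f(k1+k2, l1+l2), where f(k,l) := (k·l − k − l − gcd(k,l) + 2)/2. -/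
/-!
Write `cross p q = p.1 * q.2 - q.1 * p.2` and `d = cross v w` for `v = (k1,l1)`, `w = (k2,l2)`.
The triangle with vertices `0`, `v`, `v + w` is `{p | 0 ≤ cross v p ≤ cross p w ≤ d}`. As `w` is
primitive, some lattice point `p` has `cross p w = d - 1`, and it can be shifted along `w` so
that `0 ≤ cross v p < d`. Since `p` is not interior, `cross v p` is `0` or `d - 1`, and the
first case forces `d = 1` because `v` is primitive, so in fact `cross v p = d - 1`. Then
Cramer's rule `d • q = cross q w • v + cross v q • w` applied to `q = v + w - p` gives
`d • q = v + w`, so `d ∣ gcd(v + w)`; conversely `gcd(v + w) ∣ cross v (v + w) = d`.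
-/

/-- The signed count `f(k,l) = (k·l − k − l − gcd(k,l) + 2)/2` of lattice points inside the
triangle with vertices `(0,0)`, `(0,l)`, `(k,l)`. -/
noncomputable def latticeF (k l : ℤ) : ℚ :=
  ((k * l - k - l - (Int.gcd k l : ℤ) + 2 : ℤ) : ℚ) / 2

def cross {R : Type*} [CommRing R] (p q : R × R) : R := p.1 * q.2 - q.1 * p.2

theorem cross_smul_eq_smul_add_smul {R : Type*} [CommRing R] (v w q : R × R) :
    cross v w • q = cross q w • v + cross v q • w := by
  ext <;> simp only [cross, Prod.smul_fst, Prod.smul_snd, Prod.fst_add, Prod.snd_add,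
    smul_eq_mul] <;> ring

theorem Convex.smul_add_smul_mem_of_zero_mem {𝕜 E : Type*} [Field 𝕜] [LinearOrder 𝕜]
    [IsStrictOrderedRing 𝕜] [AddCommGroup E] [Module 𝕜 E] {s : Set E} (hs : Convex 𝕜 s)
    (h₀ : 0 ∈ s) {x y : E} (hx : x ∈ s) (hy : y ∈ s) {a b : 𝕜} (ha : 0 ≤ a) (hb : 0 ≤ b)
    (hab : a + b ≤ 1) : a • x + b • y ∈ s := by
  rcases (add_nonneg ha hb).eq_or_lt with h | h
  · obtain ⟨rfl, rfl⟩ : a = 0 ∧ b = 0 := ⟨by linarith, by linarith⟩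
    simpa using h₀
  · have hxy : (a / (a + b)) • x + (b / (a + b)) • y ∈ s :=
      hs hx hy (by positivity) (by positivity) (by field_simp)
    convert (hs.starConvex h₀).smul_mem hxy h.le hab using 1
    simp only [smul_add, smul_smul, mul_div_cancel₀ _ h.ne']

theorem mem_convexHull_triangle {a b q : ℝ × ℝ} (hab : 0 < cross a b) (h₁ : 0 ≤ cross a q)
    (h₂ : cross a q ≤ cross q b) (h₃ : cross q b ≤ cross a b) :
    q ∈ convexHull ℝ {0, a, a + b} := by
  have hq : q = ((cross q b - cross a q) / cross a b) • a + (cross a q / cross a b) • (a + b) := by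
    have := cross_smul_eq_smul_add_smul a b q
    ext <;> simp only [Prod.ext_iff, Prod.smul_fst, Prod.smul_snd, Prod.fst_add, Prod.snd_add,
      smul_eq_mul] at this ⊢ <;> field_simp <;> linarith [this.1, this.2]
  rw [hq]
  refine (convex_convexHull ℝ _).smul_add_smul_mem_of_zero_mem (subset_convexHull ℝ _ (by simp))
    (subset_convexHull ℝ _ (by simp)) (subset_convexHull ℝ _ (by simp)) ?_ ?_ ?_
  · exact div_nonneg (by linarith) hab.le
  · exact div_nonneg h₁ hab.le
  · rw [← add_div, sub_add_cancel]
    exact div_le_one_of_le₀ h₃ hab.le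

theorem mem_interior_convexHull_triangle {a b q : ℝ × ℝ} (h₁ : 0 < cross a q)
    (h₂ : cross a q < cross q b) (h₃ : cross q b < cross a b) :
    q ∈ interior (convexHull ℝ {0, a, a + b}) := by
  have hopen :
      IsOpen {q : ℝ × ℝ | 0 < cross a q ∧ cross a q < cross q b ∧ cross q b < cross a b} := by
    simp only [cross]
    refine IsOpen.and ?_ (IsOpen.and ?_ ?_) <;> exact isOpen_lt (by fun_prop) (by fun_prop)
  refine interior_maximal ?_ hopen ⟨h₁, h₂, h₃⟩
  rintro q ⟨h₁, h₂, h₃⟩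
  exact mem_convexHull_triangle (by linarith) h₁.le h₂.le h₃.le

theorem exists_cross_eq_of_gcd_eq_one {v w : ℤ × ℤ} (hw : Int.gcd w.1 w.2 = 1)
    (hd : 0 < cross v w) (t : ℤ) :
    ∃ p : ℤ × ℤ, cross p w = t ∧ 0 ≤ cross v p ∧ cross v p < cross v w := by
  obtain ⟨u, u', hu⟩ := Int.isCoprime_iff_gcd_eq_one.mpr hw
  set p₀ : ℤ × ℤ := t • (u', -u)
  refine ⟨p₀ - (cross v p₀ / cross v w) • w, ?_, ?_, ?_⟩
  · simp only [p₀, cross, Prod.smul_fst, Prod.smul_snd, Prod.fst_sub, Prod.snd_sub, smul_eq_mul]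
    linear_combination t * hu
  all_goals
    have hmod : cross v (p₀ - (cross v p₀ / cross v w) • w) = cross v p₀ % cross v w := by
      rw [Int.emod_def]
      simp only [cross, Prod.smul_fst, Prod.smul_snd, Prod.fst_sub, Prod.snd_sub, smul_eq_mul]
      ring
    rw [hmod]
  · exact Int.emod_nonneg _ hd.ne'
  · exact Int.emod_lt_of_pos _ hd

theorem dvd_of_smul_eq_smul_of_gcd_eq_one {v p : ℤ × ℤ} {n m : ℤ} (hv : Int.gcd v.1 v.2 = 1)
    (h : n • p = m • v) : n ∣ m := by
  obtain ⟨u, u', hu⟩ := Int.isCoprime_iff_gcd_eq_one.mpr hv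
  have h₁ : n * p.1 = m * v.1 := congrArg Prod.fst h
  have h₂ : n * p.2 = m * v.2 := congrArg Prod.snd h
  exact ⟨u * p.1 + u' * p.2, by linear_combination -m * hu - u * h₁ - u' * h₂⟩

theorem cross_eq_gcd_of_no_interior_point {v w : ℤ × ℤ} (hv : Int.gcd v.1 v.2 = 1)
    (hw : Int.gcd w.1 w.2 = 1) (hd : 0 < cross v w)
    (hempty : ∀ p : ℤ × ℤ, ¬(0 < cross v p ∧ cross v p < cross p w ∧ cross p w < cross v w)) :
    cross v w = Int.gcd (v.1 + w.1) (v.2 + w.2) := by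
  set d := cross v w
  obtain ⟨p, hpw, hvp₀, hvp⟩ := exists_cross_eq_of_gcd_eq_one hw hd (d - 1)
  have hcramer := cross_smul_eq_smul_add_smul v w p
  have hvp_eq : cross v p = d - 1 := by
    rcases hvp₀.eq_or_lt with h | h
    · have hdvd : d ∣ d - 1 := dvd_of_smul_eq_smul_of_gcd_eq_one hv
        (by rw [hcramer, hpw, ← h, zero_smul, add_zero])
      have : d = 1 := Int.eq_one_of_dvd_one hd.le ((dvd_sub_right dvd_rfl).mp hdvd)
      omega
    · by_contra hne
      exact hempty p ⟨h, by omega, by omega⟩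
  have hq₁ : cross (v + w - p) w = 1 := by
    simp only [cross, d, Prod.fst_add, Prod.snd_add, Prod.fst_sub, Prod.snd_sub] at hpw ⊢
    linear_combination -hpw
  have hq₂ : cross v (v + w - p) = 1 := by
    simp only [cross, d, Prod.fst_add, Prod.snd_add, Prod.fst_sub, Prod.snd_sub] at hvp_eq ⊢
    linear_combination -hvp_eq
  have hsum : d • (v + w - p) = v + w := by
    rw [cross_smul_eq_smul_add_smul, hq₁, hq₂, one_smul, one_smul]
  have hdvd : d ∣ Int.gcd (v.1 + w.1) (v.2 + w.2) :=
    Int.dvd_coe_gcd (Dvd.intro _ (congrArg Prod.fst hsum)) (Dvd.intro _ (congrArg Prod.snd hsum))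
  have hgcd : (Int.gcd (v.1 + w.1) (v.2 + w.2) : ℤ) ∣ d := by
    have hd_eq : d = v.1 * (v.2 + w.2) - (v.1 + w.1) * v.2 := by simp only [d, cross]; ring
    rw [hd_eq]
    exact dvd_sub ((Int.gcd_dvd_right _ _).mul_left _) ((Int.gcd_dvd_left _ _).mul_right _)
  exact Int.dvd_antisymm hd.le (Int.natCast_nonneg _) hdvd hgcd

/-- If `(k1,l1)` and `(k2,l2)` are primitive integer vectors with
`k1·l2 − k2·l1 > 0` such that the triangle with vertices `(0,0)`, `(k1,l1)`,
`(k1+k2,l1+l2)` has no interior lattice point, then `k1·l2 − k2·l1 = gcd(k1+k2,l1+l2)`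
and consequently `f(k1,l1) + f(k2,l2) + k2·l1 = f(k1+k2,l1+l2)`. -/
theorem det_eq_gcd_of_empty_triangle (k1 l1 k2 l2 : ℤ)
    (h1 : Int.gcd k1 l1 = 1) (h2 : Int.gcd k2 l2 = 1)
    (hdet : 0 < k1 * l2 - k2 * l1)
    (hempty : ∀ p : ℤ × ℤ, ((p.1 : ℝ), (p.2 : ℝ)) ∉
      interior (convexHull ℝ {((0 : ℝ), (0 : ℝ)), ((k1 : ℝ), (l1 : ℝ)),
        (((k1 : ℝ) + (k2 : ℝ)), ((l1 : ℝ) + (l2 : ℝ)))})) :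
    k1 * l2 - k2 * l1 = (Int.gcd (k1 + k2) (l1 + l2) : ℤ) ∧
    latticeF k1 l1 + latticeF k2 l2 + ((k2 * l1 : ℤ) : ℚ)
      = latticeF (k1 + k2) (l1 + l2) := by
  have hcross : k1 * l2 - k2 * l1 = (Int.gcd (k1 + k2) (l1 + l2) : ℤ) :=
    cross_eq_gcd_of_no_interior_point (v := (k1, l1)) (w := (k2, l2)) h1 h2 hdet
      fun p ⟨h₁, h₂, h₃⟩ => hempty p <| mem_interior_convexHull_triangle
        (a := ((k1 : ℝ), (l1 : ℝ))) (b := ((k2 : ℝ), (l2 : ℝ)))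
        (by simp only [cross] at h₁ ⊢; exact_mod_cast h₁)
        (by simp only [cross] at h₂ ⊢; exact_mod_cast h₂)
        (by simp only [cross] at h₃ ⊢; exact_mod_cast h₃)
  refine ⟨hcross, ?_⟩
  simp only [latticeF, h1, h2, ← hcross]
  push_cast
  ring
end

section
/- Let A be an associative unital ℂ-algebra, and let (e_i)_{i∈ℤ} and (t_i)_{i∈ℤ, i≠0} be families of elements of A such that [t_i, e_j] = e_{i+j} for all integers i ≠ 0 and all j ∈ ℤ. Then the following are equivalent: (i) [e_0, [e_1, e_{−1}]] = 0; (ii) Σ_{σ∈S_3} [e_{i_{σ(1)}}, [e_{i_{σ(2)}+1}, e_{i_{σ(3)}−1}]] = 0 for all i_1, i_2, i_3 ∈ ℤ. -/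
/-!
Bracketing with `t k` is a derivation that shifts every index by `k`, so it sends the symmetrised
cubic Serre element `S(i₁, i₂, i₃)` to `S(i₁ + k, i₂, i₃) + S(i₁, i₂ + k, i₃) + S(i₁, i₂, i₃ + k)`.
Starting from `S(0, 0, 0) = 6 [e₀, [e₁, e₋₁]]` and using the symmetry of `S`, one kills successively
`S(a, 0, 0)` (three equal terms), `S(a, b, 0)` (two equal terms) and `S(a, b, c)`; the divisions by
`3` and `2` are where characteristic zero enters.
-/

lemma eq_zero_of_comp_perm_of_sum_shift {M : Type*} [AddCommGroup M] [IsAddTorsionFree M]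
    {f : (Fin 3 → ℤ) → M} (hperm : ∀ i (τ : Equiv.Perm (Fin 3)), f (i ∘ τ) = f i)
    (hshift : ∀ k ≠ 0, ∀ i, f i = 0 → ∑ m, f (i + Pi.single m k) = 0) (h0 : f 0 = 0)
    (i : Fin 3 → ℤ) : f i = 0 := by
  have shift {k : ℤ} (hk : k ≠ 0) {a b c : ℤ} (h : f ![a, b, c] = 0) :
      f ![a + k, b, c] + f ![a, b + k, c] + f ![a, b, c + k] = 0 := by
    convert hshift k hk _ h using 1
    rw [Fin.sum_univ_three]
    congr 3 <;> ext m <;> fin_cases m <;> simp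
  have swap01 (a b c : ℤ) : f ![a, b, c] = f ![b, a, c] := by
    rw [← hperm _ (Equiv.swap 0 1)]; congr 1; ext m; fin_cases m <;> rfl
  have swap12 (a b c : ℤ) : f ![a, b, c] = f ![a, c, b] := by
    rw [← hperm _ (Equiv.swap 1 2)]; congr 1; ext m; fin_cases m <;> rfl
  have h000 : f ![0, 0, 0] = 0 := by
    rwa [show (![0, 0, 0] : Fin 3 → ℤ) = 0 by ext m; fin_cases m <;> rfl]
  have ha00 (a : ℤ) : f ![a, 0, 0] = 0 := by
    rcases eq_or_ne a 0 with rfl | ha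
    · exact h000
    have h := shift ha h000
    rw [zero_add, swap12 0 0 a, swap01 0 a] at h
    have h3 : 3 • f ![a, 0, 0] = 0 := by rw [← h, succ_nsmul, two_nsmul]
    simpa using h3
  have hab0 (a b : ℤ) : f ![a, b, 0] = 0 := by
    rcases eq_or_ne b 0 with rfl | hb
    · exact ha00 a
    have h := shift hb (ha00 a)
    rw [ha00, zero_add, zero_add, swap12 a 0 b] at h
    have h2 : 2 • f ![a, b, 0] = 0 := by rw [two_nsmul, h]
    simpa using h2
  obtain ⟨a, b, c, rfl⟩ : ∃ a b c : ℤ, i = ![a, b, c] :=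
    ⟨i 0, i 1, i 2, by ext m; fin_cases m <;> rfl⟩
  rcases eq_or_ne c 0 with rfl | hc
  · exact hab0 a b
  simpa [hab0] using shift hc (hab0 a b)

section CubicSerre

variable {L : Type*} [LieRing L]

def cubicSerreTerm (e : ℤ → L) (j : Fin 3 → ℤ) : L :=
  ⁅e (j 0), ⁅e (j 1 + 1), e (j 2 - 1)⁆⁆

def cubicSerre (e : ℤ → L) (i : Fin 3 → ℤ) : L :=
  ∑ σ : Equiv.Perm (Fin 3), cubicSerreTerm e (i ∘ σ)

lemma cubicSerre_comp_perm (e : ℤ → L) (i : Fin 3 → ℤ) (τ : Equiv.Perm (Fin 3)) :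
    cubicSerre e (i ∘ τ) = cubicSerre e i := by
  simpa [cubicSerre, Function.comp_assoc] using
    Equiv.sum_comp (Equiv.mulLeft τ) fun σ => cubicSerreTerm e (i ∘ σ)

lemma cubicSerre_zero (e : ℤ → L) : cubicSerre e 0 = 6 • ⁅e 0, ⁅e 1, e (-1)⁆⁆ := by
  simp [cubicSerre, cubicSerreTerm, Fintype.card_perm, Nat.factorial]

variable {e : ℤ → L} {x : L} {k : ℤ}

lemma lie_cubicSerreTerm (hx : ∀ j, ⁅x, e j⁆ = e (j + k)) (j : Fin 3 → ℤ) :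
    ⁅x, cubicSerreTerm e j⁆ = ∑ l, cubicSerreTerm e (j + Pi.single l k) := by
  simp only [cubicSerreTerm, Fin.sum_univ_three, leibniz_lie x (e _), hx, lie_add, Pi.add_apply,
    Pi.single_eq_same, ne_eq, Fin.reduceEq, not_false_eq_true, Pi.single_eq_of_ne, add_zero,
    add_right_comm, sub_add_eq_add_sub]
  abel

lemma lie_cubicSerre (hx : ∀ j, ⁅x, e j⁆ = e (j + k)) (i : Fin 3 → ℤ) :
    ⁅x, cubicSerre e i⁆ = ∑ m, cubicSerre e (i + Pi.single m k) := by
  have shift (σ : Equiv.Perm (Fin 3)) (l : Fin 3) :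
      i ∘ σ + Pi.single l k = (i + Pi.single (σ l) k) ∘ σ := by
    rw [Pi.add_comp, Pi.single_comp_equiv, Equiv.symm_apply_apply]
  simp only [cubicSerre, lie_sum, lie_cubicSerreTerm hx, shift]
  exact (Finset.sum_congr rfl fun σ _ =>
    Equiv.sum_comp σ fun m => cubicSerreTerm e ((i + Pi.single m k) ∘ σ)).trans Finset.sum_comm

theorem cubicSerre_eq_zero_iff [IsAddTorsionFree L] {e t : ℤ → L}
    (hte : ∀ k ≠ 0, ∀ j, ⁅t k, e j⁆ = e (k + j)) :
    (∀ i, cubicSerre e i = 0) ↔ ⁅e 0, ⁅e 1, e (-1)⁆⁆ = 0 := by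
  refine ⟨fun h => by simpa [cubicSerre_zero] using h 0, fun h => ?_⟩
  refine eq_zero_of_comp_perm_of_sum_shift (cubicSerre_comp_perm e) (fun k hk i hi => ?_)
    (by simp [cubicSerre_zero, h])
  rw [← lie_cubicSerre fun j => (hte k hk j).trans (congrArg e (add_comm k j)), hi, lie_zero]

end CubicSerre

attribute [local instance 100] LieRing.ofAssociativeRing

/-- In an associative unital `ℂ`-algebra `A`, given families
`(e_i)_{i∈ℤ}` and `(t_i)_{i≠0}` with `[t_i, e_j] = e_{i+j}` for all `i ≠ 0`, `j ∈ ℤ`,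
the single cubic Serre relation `[e_0,[e_1,e_{−1}]] = 0` is equivalent to the full family
of cubic Serre relations `Σ_{σ∈S_3} [e_{i_{σ(1)}},[e_{i_{σ(2)}+1},e_{i_{σ(3)}−1}]] = 0`. -/
theorem serre_cubic_iff_special_case {A : Type*} [Ring A] [Algebra ℂ A]
    (e : ℤ → A) (t : ℤ → A)
    (hte : ∀ i : ℤ, i ≠ 0 → ∀ j : ℤ, t i * e j - e j * t i = e (i + j)) :
    (e 0 * (e 1 * e (-1) - e (-1) * e 1) - (e 1 * e (-1) - e (-1) * e 1) * e 0 = 0) ↔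
    (∀ i : Fin 3 → ℤ, ∑ σ : Equiv.Perm (Fin 3),
        (e (i (σ 0)) * (e (i (σ 1) + 1) * e (i (σ 2) - 1) - e (i (σ 2) - 1) * e (i (σ 1) + 1))
          - (e (i (σ 1) + 1) * e (i (σ 2) - 1) - e (i (σ 2) - 1) * e (i (σ 1) + 1)) * e (i (σ 0)))
        = 0) := by
  have := IsAddTorsionFree.of_isTorsionFree ℂ A
  simp only [← Ring.lie_def] at hte ⊢
  exact (cubicSerre_eq_zero_iff hte).symm
end
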